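/- arXiv:1405.5940 — 6 statements merged into one kernel-verified Lean document; each statement's English description precedes it below -/
import Mathlib

section
/- Let x ∈ [0,1]^{k×m} be a fractional assignment with βF(x) + C(x) ≥ α·OPT, where F(x) = min_i Σ_j p_{ij} x_{ij} is the fairness, C(x) = Σ_{ij} c_{ij} x_{ij} is the cost, and OPT is the maximum of F(y)+C(y) over integral assignments y. Let y be a random integral assignment with z·E[F(y)] ≥ F(x) for some z ≥ 1 and E[y_{ij}] ≤ x_{ij} for all i,j, and let v be the integral assignment maximizing C. Then for any γ ∈ [0,1], either z·β·E[F(y)] + E[C(y)] ≥ γ·α·OPT, or F(v) + C(v) ≥ (1−γ)·α·OPT. -/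
open Finset

/-- Load of machine `i` under assignment `x`. -/
noncomputable def fairness {k m : ℕ} (hk : 0 < k) (p x : Fin k → Fin m → ℝ) : ℝ :=
  Finset.univ.inf' (Finset.univ_nonempty_iff.mpr ⟨⟨0, hk⟩⟩) (fun i => ∑ j, p i j * x i j)

noncomputable def cost {k m : ℕ} (c x : Fin k → Fin m → ℝ) : ℝ := ∑ i, ∑ j, c i j * x i j

def integral {k m : ℕ} (x : Fin k → Fin m → ℝ) : Prop := ∀ i j, x i j = 0 ∨ x i j = 1

def feasible {k m : ℕ} (x : Fin k → Fin m → ℝ) : Prop :=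
  integral x ∧ ∀ j, ∑ i, x i j ≤ 1

theorem stmt0 {k m : ℕ} (hk : 0 < k)
    (p c : Fin k → Fin m → ℝ) (hp : ∀ i j, 0 ≤ p i j)
    (α β z OPT : ℝ) (hβ : 0 ≤ β) (hz : 1 ≤ z)
    (x : Fin k → Fin m → ℝ) (hx0 : ∀ i j, 0 ≤ x i j) (hx1 : ∀ i j, x i j ≤ 1)
    (hxcol : ∀ j, ∑ i, x i j ≤ 1)
    (hOPT : ∀ y', feasible y' → fairness hk p y' + cost c y' ≤ OPT)
    (happrox : β * fairness hk p x + cost c x ≥ α * OPT)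
    (Ω : Type) [Fintype Ω] (μ : Ω → ℝ) (hμ0 : ∀ ω, 0 ≤ μ ω) (hμ1 : ∑ ω, μ ω = 1)
    (Y : Ω → Fin k → Fin m → ℝ) (hY : ∀ ω, feasible (Y ω))
    (hzF : z * (∑ ω, μ ω * fairness hk p (Y ω)) ≥ fairness hk p x)
    (hYx : ∀ i j, (∑ ω, μ ω * Y ω i j) ≤ x i j)
    (v : Fin k → Fin m → ℝ) (hvfeas : feasible v)
    (hv : ∀ w, feasible w → cost c w ≤ cost c v)
    (γ : ℝ) (hγ0 : 0 ≤ γ) (hγ1 : γ ≤ 1) :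
    z * β * (∑ ω, μ ω * fairness hk p (Y ω)) + (∑ ω, μ ω * cost c (Y ω)) ≥ γ * α * OPT
      ∨ fairness hk p v + cost c v ≥ (1 - γ) * α * OPT := by
  classical
  set E : Fin k → Fin m → ℝ := fun i j => ∑ ω, μ ω * Y ω i j with hE
  have hE0 : ∀ i j, 0 ≤ E i j := by
    intro i j
    apply Finset.sum_nonneg
    intro ω _
    rcases (hY ω).1 i j with h | h <;> simp [h, hμ0 ω]
  -- argmax machine for each job
  have hijex : ∀ j : Fin m, ∃ i0 : Fin k, ∀ i : Fin k, c i j ≤ c i0 j := by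
    intro j
    obtain ⟨i0, -, h⟩ := Finset.exists_max_image Finset.univ (fun i => c i j)
      ⟨⟨0, hk⟩, Finset.mem_univ _⟩
    exact ⟨i0, fun i => h i (Finset.mem_univ _)⟩
  choose ij hij using hijex
  set w : Fin k → Fin m → ℝ :=
    fun i j => if 0 ≤ c (ij j) j ∧ i = ij j then 1 else 0 with hw
  have hwfeas : feasible w := by
    constructor
    · intro i j
      by_cases h : 0 ≤ c (ij j) j ∧ i = ij j <;> simp [hw, h]
    · intro j
      by_cases h : 0 ≤ c (ij j) j
      · simp [hw, h]
      · simp [hw, h]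
  have hcw : cost c w = ∑ j, max (c (ij j) j) 0 := by
    rw [cost, Finset.sum_comm]
    apply Finset.sum_congr rfl
    intro j _
    by_cases h : 0 ≤ c (ij j) j
    · simp [hw, h, mul_ite, max_eq_left h]
    · simp [hw, h, max_eq_right (le_of_not_ge h)]
  -- expected cost identity
  have hEC : (∑ ω, μ ω * cost c (Y ω)) = ∑ i, ∑ j, c i j * E i j := by
    simp only [cost, hE, Finset.mul_sum]
    rw [Finset.sum_comm]
    apply Finset.sum_congr rfl
    intro i _
    rw [Finset.sum_comm]
    apply Finset.sum_congr rfl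
    intro j _
    apply Finset.sum_congr rfl
    intro ω _
    ring
  -- C(x) - E[C(Y)] ≤ cost c w
  have hkey : cost c x - (∑ ω, μ ω * cost c (Y ω)) ≤ cost c w := by
    rw [hEC, hcw, cost]
    simp only [← Finset.sum_sub_distrib]
    rw [Finset.sum_comm]
    apply Finset.sum_le_sum
    intro j _
    have h1 : ∑ i, (c i j * x i j - c i j * E i j)
        ≤ ∑ i, max (c (ij j) j) 0 * (x i j - E i j) := by
      apply Finset.sum_le_sum
      intro i _
      have hd : 0 ≤ x i j - E i j := by linarith [hYx i j]
      have hc : c i j ≤ max (c (ij j) j) 0 := le_trans (hij j i) (le_max_left _ _)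
      nlinarith [hd, hc]
    have h2 : ∑ i, max (c (ij j) j) 0 * (x i j - E i j) ≤ max (c (ij j) j) 0 := by
      rw [← Finset.mul_sum]
      have hs : ∑ i, (x i j - E i j) ≤ 1 := by
        rw [Finset.sum_sub_distrib]
        have := Finset.sum_nonneg (fun i (_ : i ∈ Finset.univ) => hE0 i j)
        linarith [hxcol j]
      nlinarith [le_max_right (c (ij j) j) (0:ℝ)]
    calc ∑ i, (c i j * x i j - c i j * E i j)
        ≤ ∑ i, max (c (ij j) j) 0 * (x i j - E i j) := h1
      _ ≤ max (c (ij j) j) 0 := h2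
  have hwv : cost c w ≤ cost c v := hv w hwfeas
  have hFv : 0 ≤ fairness hk p v := by
    apply Finset.le_inf'
    intro i _
    apply Finset.sum_nonneg
    intro j _
    rcases hvfeas.1 i j with h | h <;> simp [h, hp i j]
  have hβF : β * fairness hk p x ≤ z * β * (∑ ω, μ ω * fairness hk p (Y ω)) := by
    have := mul_le_mul_of_nonneg_left hzF hβ
    nlinarith
  by_contra hcon
  push_neg at hcon
  obtain ⟨h1, h2⟩ := hcon
  have : γ * α * OPT + (1 - γ) * α * OPT = α * OPT := by ring
  nlinarith [happrox]
end

section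
/- Any weighted bipartite graph with nonnegative edge weights and arbitrary edge costs can be modified, by iteratively shifting weights around cycles, into an acyclic weighted graph (i.e., the support of the weights contains no cycle) without decreasing the total weighted cost Σ x_{ij} c_{ij} and without changing the weighted degree m_v = Σ_{j} x_{vj} of any vertex v. -/
/-!
If the support graph of `x` contains a cycle, let `d` be the signed indicator of the cycle
(`+1` on the edges it traverses from `L` to `R`, `-1` on the others). A cycle traverses each of its
edges once, so `d` is nonzero, it has zero row and column sums, and it lives on the support of `x`.
Replacing `d` by `-d` if necessary, `d` has nonnegative cost; then `x + t • d`, for the largest `t`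
keeping it nonnegative, has the same weighted degrees, no smaller cost and a strictly smaller
support. Induction on the size of the support finishes the proof.
-/

open Finset

namespace SimpleGraph.Walk

variable {V : Type*} [DecidableEq V] {G : SimpleGraph V}

def flow : ∀ {u v : V}, G.Walk u v → V → V → ℝ
  | _, _, nil, _, _ => 0
  | u, _, cons (v := w) _ p, a, b =>
      (if a = u ∧ b = w then 1 else 0) - (if a = w ∧ b = u then 1 else 0) + p.flow a b

theorem flow_swap {u v : V} (p : G.Walk u v) (a b : V) : p.flow b a = -p.flow a b := by
  induction p with
  | nil => simp [flow]
  | cons _ p ih =>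
    simp only [flow, ih, and_comm]
    ring

theorem sum_flow [Fintype V] {u v : V} (p : G.Walk u v) (a : V) :
    ∑ b, p.flow a b = (if a = u then 1 else 0) - (if a = v then 1 else 0) := by
  induction p with
  | nil => simp [flow]
  | cons _ p ih =>
    simp only [flow, sum_add_distrib, sum_sub_distrib, ih, ite_and]
    simp only [sum_ite_irrel, sum_ite_eq', mem_univ, if_true, sum_const_zero]
    ring

theorem sum_flow_eq_zero [Fintype V] {u : V} (p : G.Walk u u) (a : V) :
    ∑ b, p.flow a b = 0 := by
  simp [p.sum_flow]

theorem flow_eq_zero_of_not_mem_edges {u v a b : V} {p : G.Walk u v} (h : s(a, b) ∉ p.edges) :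
    p.flow a b = 0 := by
  induction p with
  | nil => rfl
  | cons _ p ih =>
    simp only [edges_cons, List.mem_cons, not_or, Sym2.eq_iff] at h
    simp only [flow, ih h.2]
    grind

theorem flow_eq_zero_of_not_adj {u v a b : V} (p : G.Walk u v) (h : ¬G.Adj a b) :
    p.flow a b = 0 :=
  flow_eq_zero_of_not_mem_edges fun he => h (p.adj_of_mem_edges he)

theorem IsTrail.flow_ne_zero {u v a b : V} {p : G.Walk u v} (hp : p.IsTrail)
    (h : s(a, b) ∈ p.edges) : p.flow a b ≠ 0 := by
  induction p with
  | nil => simp at h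
  | cons hadj p ih =>
    rw [isTrail_cons] at hp
    rw [edges_cons, List.mem_cons] at h
    simp only [flow]
    rcases h with h | h
    · rw [flow_eq_zero_of_not_mem_edges (h ▸ hp.2)]
      rcases Sym2.eq_iff.mp h with ⟨rfl, rfl⟩ | ⟨rfl, rfl⟩ <;> simp [hadj.ne, hadj.ne.symm]
    · have hne : s(a, b) ≠ s(_, _) := fun he => hp.2 (he ▸ h)
      rw [Ne, Sym2.eq_iff, not_or] at hne
      simpa [hne.1, hne.2] using ih hp.1 h

end SimpleGraph.Walk

theorem exists_neg_of_sum_eq_zero {ι : Type*} [Fintype ι] {f : ι → ℝ} (hsum : ∑ k, f k = 0)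
    (hne : ∃ k, f k ≠ 0) : ∃ k, f k < 0 := by
  by_contra! hf
  obtain ⟨k, hk⟩ := hne
  exact hk ((Fintype.sum_eq_zero_iff_of_nonneg hf).mp hsum ▸ rfl)

/-- The ratio test of the simplex method. -/
theorem exists_add_mul_nonneg_card_pos_lt {ι : Type*} [Fintype ι] {x d : ι → ℝ}
    (hx : ∀ k, 0 ≤ x k) (hd : ∀ k, d k ≠ 0 → 0 < x k) (hneg : ∃ k, d k < 0) :
    ∃ t, 0 ≤ t ∧ (∀ k, 0 ≤ x k + t * d k) ∧
      #{k | 0 < x k + t * d k} < #{k | 0 < x k} := by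
  obtain ⟨k₀, hk₀, hmin⟩ := exists_min_image {k | d k < 0} (fun k => x k / -d k)
    (let ⟨k, hk⟩ := hneg; ⟨k, by simpa using hk⟩)
  simp only [mem_filter, mem_univ, true_and] at hk₀ hmin
  set t := x k₀ / -d k₀
  have ht : 0 ≤ t := div_nonneg (hx k₀) (neg_nonneg.mpr hk₀.le)
  refine ⟨t, ht, fun k => ?_, ?_⟩
  · rcases lt_or_ge (d k) 0 with hk | hk
    · linarith [(le_div_iff₀ (neg_pos.mpr hk)).mp (hmin k hk)]
    · exact add_nonneg (hx k) (mul_nonneg ht hk)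
  · refine card_lt_card ((ssubset_iff_of_subset fun k hk => ?_).mpr ⟨k₀, ?_, ?_⟩)
    · simp only [mem_filter, mem_univ, true_and] at hk ⊢
      by_cases hdk : d k = 0
      · simpa [hdk] using hk
      · exact hd k hdk
    · simpa using hd k₀ hk₀.ne
    · have : t * d k₀ = -x k₀ := by simp only [t]; field_simp [hk₀.ne]
      simp [this]

namespace WeightedBipartite

open Sum SimpleGraph

variable {L R : Type*}

def supportGraph (x : L → R → ℝ) : SimpleGraph (L ⊕ R) :=
  fromRel fun a b => ∃ i j, a = inl i ∧ b = inr j ∧ 0 < x i j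

section Graph

variable {x : L → R → ℝ}

@[simp]
theorem supportGraph_adj_inl_inr {i : L} {j : R} :
    (supportGraph x).Adj (inl i) (inr j) ↔ 0 < x i j := by
  simp [supportGraph]

@[simp]
theorem not_supportGraph_adj_inl_inl {i i' : L} : ¬(supportGraph x).Adj (inl i) (inl i') := by
  simp [supportGraph]

@[simp]
theorem not_supportGraph_adj_inr_inr {j j' : R} : ¬(supportGraph x).Adj (inr j) (inr j') := by
  simp [supportGraph]

theorem exists_of_supportGraph_adj {a b : L ⊕ R} (h : (supportGraph x).Adj a b) :
    ∃ i j, 0 < x i j ∧ s(a, b) = s(inl i, inr j) := by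
  rcases a with i | j <;> rcases b with i' | j'
  · exact absurd h not_supportGraph_adj_inl_inl
  · exact ⟨i, j', supportGraph_adj_inl_inr.mp h, rfl⟩
  · exact ⟨i', j, supportGraph_adj_inl_inr.mp h.symm, Sym2.eq_swap⟩
  · exact absurd h not_supportGraph_adj_inr_inr

end Graph

variable [Fintype L] [Fintype R]

def IsImprovement (c x y : L → R → ℝ) : Prop :=
  (∀ i j, 0 ≤ y i j) ∧ ∑ i, ∑ j, x i j * c i j ≤ ∑ i, ∑ j, y i j * c i j ∧
    (∀ i, ∑ j, y i j = ∑ j, x i j) ∧ (∀ j, ∑ i, y i j = ∑ i, x i j)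

theorem IsImprovement.refl {c x : L → R → ℝ} (hx : ∀ i j, 0 ≤ x i j) : IsImprovement c x x :=
  ⟨hx, le_rfl, fun _ => rfl, fun _ => rfl⟩

theorem IsImprovement.trans {c x y z : L → R → ℝ} (hxy : IsImprovement c x y)
    (hyz : IsImprovement c y z) : IsImprovement c x z :=
  ⟨hyz.1, hxy.2.1.trans hyz.2.1, fun i => (hyz.2.2.1 i).trans (hxy.2.2.1 i),
    fun j => (hyz.2.2.2 j).trans (hxy.2.2.2 j)⟩

noncomputable def posSupport (x : L → R → ℝ) : Finset (L × R) :=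
  {p | 0 < x p.1 p.2}

theorem exists_isImprovement_card_lt_of_circulation (c : L → R → ℝ) {x d : L → R → ℝ}
    (hx : ∀ i j, 0 ≤ x i j) (hrow : ∀ i, ∑ j, d i j = 0) (hcol : ∀ j, ∑ i, d i j = 0)
    (hd : ∀ i j, d i j ≠ 0 → 0 < x i j) (hne : ∃ i j, d i j ≠ 0) :
    ∃ y, IsImprovement c x y ∧ #(posSupport y) < #(posSupport x) := by
  wlog hcost : 0 ≤ ∑ i, ∑ j, d i j * c i j generalizing d with H
  · refine H (d := -d) (by simpa using hrow) (by simpa using hcol) (by simpa using hd)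
      (by simpa using hne) ?_
    simp only [Pi.neg_apply, neg_mul, sum_neg_distrib]
    linarith
  have hneg : ∃ p : L × R, d p.1 p.2 < 0 :=
    exists_neg_of_sum_eq_zero (by simp [Fintype.sum_prod_type, hrow]) (by simpa using hne)
  obtain ⟨t, ht, hnonneg, hcard⟩ :=
    exists_add_mul_nonneg_card_pos_lt (fun p => hx p.1 p.2) (fun p => hd p.1 p.2) hneg
  refine ⟨fun i j => x i j + t * d i j, ⟨fun i j => hnonneg (i, j), ?_, ?_, ?_⟩, hcard⟩
  · simp only [add_mul, mul_assoc, sum_add_distrib, ← mul_sum]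
    exact le_add_of_nonneg_right (mul_nonneg ht hcost)
  · simp [sum_add_distrib, ← mul_sum, hrow]
  · simp [sum_add_distrib, ← mul_sum, hcol]

theorem exists_isImprovement_card_lt_of_not_isAcyclic (c : L → R → ℝ) {x : L → R → ℝ}
    (hx : ∀ i j, 0 ≤ x i j) (hcyc : ¬(supportGraph x).IsAcyclic) :
    ∃ y, IsImprovement c x y ∧ #(posSupport y) < #(posSupport x) := by
  classical
  obtain ⟨v, w, hw⟩ : ∃ v, ∃ w : (supportGraph x).Walk v v, w.IsCycle := by
    simpa only [IsAcyclic, not_forall, not_not] using hcyc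
  refine exists_isImprovement_card_lt_of_circulation c hx
    (d := fun i j => w.flow (inl i) (inr j)) (fun i => ?_) (fun j => ?_) (fun i j hij => ?_) ?_
  · simpa [Fintype.sum_sum_type, Walk.flow_eq_zero_of_not_adj] using w.sum_flow_eq_zero (inl i)
  · simpa [Fintype.sum_sum_type, Walk.flow_eq_zero_of_not_adj, w.flow_swap (inr j)]
      using w.sum_flow_eq_zero (inr j)
  · by_contra hxij
    exact hij (Walk.flow_eq_zero_of_not_adj w (by simpa using hxij))
  · cases w with
    | nil => exact absurd hw Walk.not_isCycle_nil
    | cons hadj p =>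
      obtain ⟨i, j, -, he⟩ := exists_of_supportGraph_adj hadj
      exact ⟨i, j, hw.isTrail.flow_ne_zero (he ▸ Walk.edges_cons hadj p ▸ List.mem_cons_self)⟩

theorem exists_isImprovement_isAcyclic (c x : L → R → ℝ) (hx : ∀ i j, 0 ≤ x i j) :
    ∃ y, IsImprovement c x y ∧ (supportGraph y).IsAcyclic := by
  induction hn : #(posSupport x) using Nat.strong_induction_on generalizing x with
  | _ n ih =>
    by_cases hac : (supportGraph x).IsAcyclic
    · exact ⟨x, .refl hx, hac⟩
    obtain ⟨y, hxy, hlt⟩ := exists_isImprovement_card_lt_of_not_isAcyclic c hx hac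
    obtain ⟨z, hyz, hz⟩ := ih _ (hn ▸ hlt) y hxy.1 rfl
    exact ⟨z, hxy.trans hyz, hz⟩

end WeightedBipartite

open WeightedBipartite in
theorem stmt3 {L R : Type} [Fintype L] [Fintype R] (x : L → R → ℝ)
    (hx : ∀ i j, 0 ≤ x i j) (c : L → R → ℝ) :
    ∃ x' : L → R → ℝ,
      (∀ i j, 0 ≤ x' i j) ∧
      (∑ i, ∑ j, x i j * c i j) ≤ (∑ i, ∑ j, x' i j * c i j) ∧
      (∀ i, ∑ j, x' i j = ∑ j, x i j) ∧
      (∀ j, ∑ i, x' i j = ∑ i, x i j) ∧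
      (SimpleGraph.fromRel
        (fun (a b : L ⊕ R) => ∃ i j, a = Sum.inl i ∧ b = Sum.inr j ∧ 0 < x' i j)).IsAcyclic := by
  obtain ⟨y, ⟨hy, hcost, hrow, hcol⟩, hac⟩ := exists_isImprovement_isAcyclic c x hx
  exact ⟨y, hy, hcost, hrow, hcol, hac⟩
end

section
/- Consider max-min fairness with costs. Let X be the optimal integral assignment (maximizing F(X) + C(X)) and suppose F(X) > 0, so every machine receives at least one job and at most m − k + 1 jobs. Form X' from X by keeping, on each machine i, only the job j(i) of maximum processing time assigned to i, and reassigning all other jobs to the machine of maximum nonnegative cost (or to no machine if all costs are negative). Then (m − k + 1)·F(X') + C(X') ≥ F(X) + C(X). -/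
open Finset

noncomputable def maxc {k m : ℕ} (hk : 0 < k) (c : Fin k → Fin m → ℝ) (j : Fin m) : ℝ :=
  Finset.univ.sup' (Finset.univ_nonempty_iff.mpr ⟨⟨0, hk⟩⟩) (fun i => c i j)

theorem stmt9 {k m : ℕ} (hk : 0 < k) (hkm : k ≤ m)
    (p c : Fin k → Fin m → ℝ) (hp : ∀ i j, 0 ≤ p i j)
    -- X is the optimal integral assignment for F + C, with F(X) > 0
    (X : Fin k → Fin m → ℝ) (hX : feasible X) (hFX : 0 < fairness hk p X)
    (hXopt : ∀ X'', feasible X'' →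
      fairness hk p X'' + cost c X'' ≤ fairness hk p X + cost c X)
    -- j(i) is the job of maximum processing time assigned to machine i in X
    (jmax : Fin k → Fin m) (hjmax1 : ∀ i, X i (jmax i) = 1)
    (hjmax2 : ∀ i j, X i j = 1 → p i j ≤ p i (jmax i))
    -- X' keeps only j(i) on machine i and reassigns every other assigned job to the
    -- machine of maximum nonnegative cost (or to no machine if all costs are negative)
    (X' : Fin k → Fin m → ℝ) (hX' : feasible X')
    (hkeep : ∀ i, X' i (jmax i) = 1)
    (hre : ∀ j0 : Fin m, (∀ i, j0 ≠ jmax i) → (∃ i, X i j0 = 1) →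
      (0 ≤ maxc hk c j0 →
        ∃ i0, c i0 j0 = maxc hk c j0 ∧ X' i0 j0 = 1 ∧ ∀ i, i ≠ i0 → X' i j0 = 0) ∧
      (maxc hk c j0 < 0 → ∀ i, X' i j0 = 0))
    (hun : ∀ j0 : Fin m, (∀ i, j0 ≠ jmax i) → (∀ i, X i j0 = 0) → ∀ i, X' i j0 = 0) :
    fairness hk p X + cost c X ≤ ((m : ℝ) - k + 1) * fairness hk p X' + cost c X' := by

  classical
  obtain ⟨hXint, hXfeas⟩ := hX
  obtain ⟨hX'int, hX'feas⟩ := hX'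
  have hX01 : ∀ i j, 0 ≤ X i j := fun i j => by rcases hXint i j with h|h <;> simp [h]
  have hX'01 : ∀ i j, 0 ≤ X' i j := fun i j => by rcases hX'int i j with h|h <;> simp [h]
  -- uniqueness: at most one machine per job
  have huniq : ∀ (x : Fin k → Fin m → ℝ), integral x → (∀ j, ∑ i, x i j ≤ 1) →
      ∀ i0 j, x i0 j = 1 → ∀ i, i ≠ i0 → x i j = 0 := by
    intro x hint hfe i0 j h1 i hne
    rcases hint i j with h|h
    · exact h
    · exfalso
      have hsub : ({i0, i} : Finset (Fin k)) ⊆ univ := subset_univ _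
      have hsum : ∑ i' ∈ ({i0, i} : Finset (Fin k)), x i' j ≤ ∑ i', x i' j :=
        Finset.sum_le_sum_of_subset_of_nonneg hsub
          (fun i' _ _ => by rcases hint i' j with h'|h' <;> simp [h'])
      rw [Finset.sum_pair (Ne.symm hne)] at hsum
      have := hfe j
      rw [h1, h] at hsum
      linarith
  have hsum_single : ∀ (x : Fin k → Fin m → ℝ), integral x → (∀ j, ∑ i, x i j ≤ 1) →
      ∀ (i0 : Fin k) (j : Fin m), x i0 j = 1 → ∑ i, c i j * x i j = c i0 j := by
    intro x hint hfe i0 j h1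
    rw [Finset.sum_eq_single i0]
    · rw [h1, mul_one]
    · intro i _ hne
      rw [huniq x hint hfe i0 j h1 i hne, mul_zero]
    · intro h; exact absurd (mem_univ i0) h
  -- cost comparison
  have hcost : cost c X ≤ cost c X' := by
    unfold cost
    rw [Finset.sum_comm]
    conv_rhs => rw [Finset.sum_comm]
    apply Finset.sum_le_sum
    intro j _
    by_cases hA : ∃ i, j = jmax i
    · obtain ⟨i, rfl⟩ := hA
      rw [hsum_single X hXint hXfeas i _ (hjmax1 i),
        hsum_single X' hX'int hX'feas i _ (hkeep i)]
    · push_neg at hA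
      by_cases hB : ∃ i, X i j = 1
      · obtain ⟨i1, hi1⟩ := hB
        rw [hsum_single X hXint hXfeas i1 j hi1]
        have hle : c i1 j ≤ maxc hk c j := by
          unfold maxc; exact Finset.le_sup' (fun i => c i j) (mem_univ i1)
        by_cases hm : 0 ≤ maxc hk c j
        · obtain ⟨i0, hc0, h1, _⟩ := (hre j hA ⟨i1, hi1⟩).1 hm
          rw [hsum_single X' hX'int hX'feas i0 j h1, hc0]
          exact hle
        · push_neg at hm
          have hz := (hre j hA ⟨i1, hi1⟩).2 hm
          have hz' : ∑ i, c i j * X' i j = 0 := by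
            apply Finset.sum_eq_zero; intro i _; rw [hz i, mul_zero]
          rw [hz']
          linarith
      · have h0 : ∀ i, X i j = 0 := fun i => (hXint i j).resolve_right (fun h => hB ⟨i, h⟩)
        have h0' := hun j hA h0
        simp [h0, h0']
  -- choose i* minimizing p i (jmax i)
  obtain ⟨istar, _, histar⟩ := Finset.exists_min_image univ (fun i => p i (jmax i))
    ⟨⟨0, hk⟩, mem_univ _⟩
  have hpstar : 0 ≤ p istar (jmax istar) := hp _ _
  have hF' : p istar (jmax istar) ≤ fairness hk p X' := by
    apply Finset.le_inf'
    intro i _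
    calc p istar (jmax istar) ≤ p i (jmax i) := histar i (mem_univ i)
      _ = p i (jmax i) * X' i (jmax i) := by rw [hkeep i, mul_one]
      _ ≤ ∑ j, p i j * X' i j :=
          Finset.single_le_sum (fun j _ => mul_nonneg (hp i j) (hX'01 i j)) (mem_univ (jmax i))
  -- job sets
  set S : Fin k → Finset (Fin m) := fun i => univ.filter (fun j => X i j = 1) with hS
  have hScard : ∀ i, ∑ j, X i j = ((S i).card : ℝ) := by
    intro i
    rw [Finset.card_eq_sum_ones]
    push_cast
    rw [Finset.sum_filter]
    apply Finset.sum_congr rfl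
    intro j _
    rcases hXint i j with h|h <;> simp [h]
  have hdisj : ∀ a ∈ (univ : Finset (Fin k)), ∀ b ∈ (univ : Finset (Fin k)), a ≠ b →
      Disjoint (S a) (S b) := by
    intro a _ b _ hab
    rw [Finset.disjoint_left]
    intro j hja hjb
    rw [hS] at hja hjb
    simp only [Finset.mem_filter] at hja hjb
    have := huniq X hXint hXfeas a j hja.2 b (Ne.symm hab)
    rw [this] at hjb
    norm_num at hjb
  have hcard_sum : ∑ i, (S i).card ≤ m := by
    rw [← Finset.card_biUnion hdisj]
    calc (univ.biUnion S).card ≤ (univ : Finset (Fin m)).card := Finset.card_le_card (subset_univ _)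
      _ = m := by simp
  have h1card : ∀ i, 1 ≤ (S i).card := by
    intro i
    apply Finset.card_pos.mpr
    exact ⟨jmax i, by simp [hS, hjmax1 i]⟩
  have hsplit : (S istar).card + ∑ i ∈ univ.erase istar, (S i).card = ∑ i, (S i).card :=
    Finset.add_sum_erase univ (fun i => (S i).card) (mem_univ istar)
  have h2 : k - 1 ≤ ∑ i ∈ univ.erase istar, (S i).card := by
    calc k - 1 = ∑ _i ∈ univ.erase istar, 1 := by
          rw [Finset.sum_const, smul_eq_mul, mul_one,
            Finset.card_erase_of_mem (mem_univ _), Finset.card_univ, Fintype.card_fin]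
      _ ≤ _ := Finset.sum_le_sum (fun i _ => h1card i)
  have hnat : (S istar).card + (k - 1) ≤ m := by omega
  have hcardR : ((S istar).card : ℝ) ≤ (m : ℝ) - k + 1 := by
    have hc : ((S istar).card : ℝ) + (((k : ℕ) - 1 : ℕ) : ℝ) ≤ (m : ℝ) := by
      exact_mod_cast hnat
    rw [Nat.cast_sub hk] at hc
    push_cast at hc
    linarith
  have hload : fairness hk p X ≤ ∑ j, p istar j * X istar j :=
    Finset.inf'_le _ (mem_univ istar)
  have h5 : ∑ j, p istar j * X istar j ≤ p istar (jmax istar) * ∑ j, X istar j := by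
    rw [Finset.mul_sum]
    apply Finset.sum_le_sum
    intro j _
    rcases hXint istar j with h|h
    · simp [h]
    · rw [h, mul_one, mul_one]; exact hjmax2 istar j h
  have h6 : p istar (jmax istar) * ∑ j, X istar j ≤ ((m : ℝ) - k + 1) * p istar (jmax istar) := by
    rw [hScard istar, mul_comm]
    exact mul_le_mul_of_nonneg_right hcardR hpstar
  have h7 : ((m : ℝ) - k + 1) * p istar (jmax istar) ≤ ((m : ℝ) - k + 1) * fairness hk p X' := by
    apply mul_le_mul_of_nonneg_left hF'
    have hmk : (k : ℝ) ≤ (m : ℝ) := by exact_mod_cast hkm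
    linarith
  linarith
end

section
/- Let V be the assignment giving every job to its machine of maximum cost, and let A* be the output of the matching-based algorithm for fairness with costs satisfying: whenever the optimal assignment X has F(X) > 0, (m−k+1)F(A*) + C(A*) ≥ F(X) + C(X). If the algorithm outputs V when F(V) + C(V) ≥ (m−k+1)F(A*) + C(A*) and A* otherwise, then its output A always satisfies (m−k+1)F(A) + C(A) ≥ OPT, where OPT = max over integral assignments of F + C. -/
open Finset

lemma fairness_nonneg {k m : ℕ} (hk : 0 < k) (p x : Fin k → Fin m → ℝ)
    (hp : ∀ i j, 0 ≤ p i j) (hx : integral x) : 0 ≤ fairness hk p x := by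
  apply Finset.le_inf'
  intro i _
  apply Finset.sum_nonneg
  intro j _
  rcases hx i j with h | h <;> simp [h, hp i j]

theorem stmt11 {k m : ℕ} (hk : 0 < k) (hkm : k ≤ m)
    (p c : Fin k → Fin m → ℝ) (hp : ∀ i j, 0 ≤ p i j)
    -- OPT is the maximum of F + C over integral assignments, attained
    (OPT : ℝ)
    (hOPTatt : ∃ X, feasible X ∧ fairness hk p X + cost c X = OPT)
    (hOPTub : ∀ X, feasible X → fairness hk p X + cost c X ≤ OPT)
    -- V gives every job to its machine of maximum cost: V maximizes C
    (V : Fin k → Fin m → ℝ) (hVfeas : feasible V)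
    (hV : ∀ X, feasible X → cost c X ≤ cost c V)
    -- A* satisfies the matching-algorithm guarantee when the optimum has positive fairness
    (Astar : Fin k → Fin m → ℝ) (hAfeas : feasible Astar)
    (hA : ∀ X, feasible X → (∀ X', feasible X' →
        fairness hk p X' + cost c X' ≤ fairness hk p X + cost c X) →
      0 < fairness hk p X →
      fairness hk p X + cost c X ≤ ((m : ℝ) - k + 1) * fairness hk p Astar + cost c Astar) :
    -- the output A (V if F(V)+C(V) ≥ (m-k+1)F(A*)+C(A*), else A*) always satisfies
    -- (m-k+1)F(A) + C(A) ≥ OPT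
    (((m : ℝ) - k + 1) * fairness hk p Astar + cost c Astar ≤ fairness hk p V + cost c V →
      OPT ≤ ((m : ℝ) - k + 1) * fairness hk p V + cost c V) ∧
    (fairness hk p V + cost c V < ((m : ℝ) - k + 1) * fairness hk p Astar + cost c Astar →
      OPT ≤ ((m : ℝ) - k + 1) * fairness hk p Astar + cost c Astar) := by
  obtain ⟨X, hXfeas, hXopt⟩ := hOPTatt
  have hFV : 0 ≤ fairness hk p V := fairness_nonneg hk p V hp hVfeas.1
  have hmk : (1 : ℝ) ≤ (m : ℝ) - k + 1 := by
    have : (k : ℝ) ≤ m := by exact_mod_cast hkm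
    linarith
  have hVbound : fairness hk p V + cost c V ≤ ((m : ℝ) - k + 1) * fairness hk p V + cost c V := by
    nlinarith
  by_cases hFX : 0 < fairness hk p X
  · have hopt := hA X hXfeas (fun X' hX' => (hOPTub X' hX').trans hXopt.ge) hFX
    rw [hXopt] at hopt
    constructor
    · intro h; linarith
    · intro _; exact hopt
  · have hFX0 : fairness hk p X = 0 :=
      le_antisymm (not_lt.mp hFX) (fairness_nonneg hk p X hp hXfeas.1)
    have : OPT ≤ cost c V := by
      rw [← hXopt, hFX0, zero_add]; exact hV X hXfeas
    constructor
    · intro _; linarith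
    · intro h; linarith
end

section
/- Consider a max-min fairness instance augmented with one special machine and one special job, where: the special machine has processing time 2 and cost −1 for the special job; all other machine-job pairs involving the special machine or special job have processing time 0 and cost 0; and all non-special pairs have cost 0. Then for the augmented instance, the optimal value of F + C is ≥ 1 if the original instance has optimal fairness ≥ 2 (assign the special job to the special machine), and the optimal value is ≤ 0 if the original instance has optimal fairness ≤ 1. -/
open Finset

noncomputable def fairG {M J : Type} [Fintype M] [Fintype J] [Nonempty M]
    (p x : M → J → ℝ) : ℝ :=
  Finset.univ.inf' Finset.univ_nonempty (fun i => ∑ j, p i j * x i j)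

noncomputable def costG {M J : Type} [Fintype M] [Fintype J] (c x : M → J → ℝ) : ℝ :=
  ∑ i, ∑ j, c i j * x i j

def feasG {M J : Type} [Fintype M] [Fintype J] (x : M → J → ℝ) : Prop :=
  (∀ i j, x i j = 0 ∨ x i j = 1) ∧ ∀ j, ∑ i, x i j ≤ 1

/-- Processing times of the augmented instance: one special machine and one special job;
the special machine takes time 2 on the special job, and all other pairs involving the
special machine or special job take time 0. -/
def paug {k m : ℕ} (p : Fin k → Fin m → ℝ) : (Fin k ⊕ Unit) → (Fin m ⊕ Unit) → ℝ
  | Sum.inl i, Sum.inl j => p i j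
  | Sum.inl _, Sum.inr _ => 0
  | Sum.inr _, Sum.inl _ => 0
  | Sum.inr _, Sum.inr _ => 2

/-- Costs of the augmented instance: -1 for the special machine on the special job,
0 everywhere else. -/
def caug (k m : ℕ) : (Fin k ⊕ Unit) → (Fin m ⊕ Unit) → ℝ
  | Sum.inr _, Sum.inr _ => -1
  | _, _ => 0

theorem stmt13 {k m : ℕ} [NeZero k] (p : Fin k → Fin m → ℝ) (hp : ∀ i j, 0 ≤ p i j) :
    -- if the original instance has optimal fairness ≥ 2, the augmented F + C optimum is ≥ 1
    ((∃ x0 : Fin k → Fin m → ℝ, feasG x0 ∧ 2 ≤ fairG p x0) →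
      ∃ x' : (Fin k ⊕ Unit) → (Fin m ⊕ Unit) → ℝ, feasG x' ∧
        1 ≤ fairG (paug p) x' + costG (caug k m) x') ∧
    -- if the original instance has optimal fairness ≤ 1, the augmented F + C optimum is ≤ 0
    ((∀ x : Fin k → Fin m → ℝ, feasG x → fairG p x ≤ 1) →
      ∀ x' : (Fin k ⊕ Unit) → (Fin m ⊕ Unit) → ℝ, feasG x' →
        fairG (paug p) x' + costG (caug k m) x' ≤ 0) := by
  constructor
  · rintro ⟨x0, ⟨hx01, hx02⟩, hfair⟩
    set x' : (Fin k ⊕ Unit) → (Fin m ⊕ Unit) → ℝ := fun i j =>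
      match i, j with
      | Sum.inl i, Sum.inl j => x0 i j
      | Sum.inr _, Sum.inr _ => 1
      | _, _ => 0 with hx'
    have hcost : costG (caug k m) x' = -1 := by
      simp [costG, caug, Fintype.sum_sum_type, hx']
    have hfairaug : (2:ℝ) ≤ fairG (paug p) x' := by
      apply Finset.le_inf'
      rintro (i | u) -
      · have h1 : fairG p x0 ≤ ∑ j, p i j * x0 i j :=
          Finset.inf'_le _ (Finset.mem_univ i)
        calc (2:ℝ) ≤ ∑ j, p i j * x0 i j := le_trans hfair h1
          _ = ∑ j, paug p (Sum.inl i) j * x' (Sum.inl i) j := by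
            simp [paug, Fintype.sum_sum_type, hx']
          _ = _ := rfl
      · have : ∑ j, paug p (Sum.inr u) j * x' (Sum.inr u) j = 2 := by
          simp [paug, Fintype.sum_sum_type, hx']
        rw [this]
    refine ⟨x', ⟨⟨?_, ?_⟩, ?_⟩⟩
    · rintro (i | u) (j | v)
      · exact hx01 i j
      · exact Or.inl rfl
      · exact Or.inl rfl
      · exact Or.inr rfl
    · rintro (j | v)
      · have := hx02 j
        simpa [Fintype.sum_sum_type, hx'] using this
      · simp [Fintype.sum_sum_type, hx']
    · rw [hcost]; linarith
  · intro h x' ⟨hx1, hx2⟩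
    rcases hx1 (Sum.inr ()) (Sum.inr ()) with h0 | h1
    · -- special job not on special machine: special machine load is 0
      have hload : ∑ j, paug p (Sum.inr ()) j * x' (Sum.inr ()) j = 0 := by
        simp [paug, Fintype.sum_sum_type, h0]
      have hF : fairG (paug p) x' ≤ 0 := by
        have : fairG (paug p) x' ≤ ∑ j, paug p (Sum.inr ()) j * x' (Sum.inr ()) j :=
          Finset.inf'_le _ (Finset.mem_univ _)
        rw [hload] at this
        exact this
      have hC : costG (caug k m) x' ≤ 0 := by
        simp [costG, caug, Fintype.sum_sum_type, h0]
      linarith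
    · -- special job on special machine: cost -1, restriction feasible so fair ≤ 1
      set x0 : Fin k → Fin m → ℝ := fun i j => x' (Sum.inl i) (Sum.inl j) with hx0
      have hfeas0 : feasG x0 := by
        constructor
        · intro i j; exact hx1 (Sum.inl i) (Sum.inl j)
        · intro j
          have := hx2 (Sum.inl j)
          rw [Fintype.sum_sum_type] at this
          have hnn : (0:ℝ) ≤ ∑ u : Unit, x' (Sum.inr u) (Sum.inl j) := by
            apply Finset.sum_nonneg
            intro u _
            rcases hx1 (Sum.inr u) (Sum.inl j) with h | h <;> rw [h] <;> norm_num
          simp only [hx0]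
          linarith
      have hF : fairG (paug p) x' ≤ 1 := by
        have h1 := h x0 hfeas0
        obtain ⟨i0, -, hi0⟩ := Finset.exists_mem_eq_inf' (s := (Finset.univ : Finset (Fin k)))
          Finset.univ_nonempty (fun i => ∑ j, p i j * x0 i j)
        have : fairG (paug p) x' ≤ ∑ j, paug p (Sum.inl i0) j * x' (Sum.inl i0) j :=
          Finset.inf'_le _ (Finset.mem_univ _)
        have heq : ∑ j, paug p (Sum.inl i0) j * x' (Sum.inl i0) j
            = ∑ j, p i0 j * x0 i0 j := by
          simp [paug, Fintype.sum_sum_type, hx0]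
        rw [heq] at this
        have hfx : fairG p x0 = ∑ j, p i0 j * x0 i0 j := hi0
        linarith
      have hC : costG (caug k m) x' = -1 := by
        simp [costG, caug, Fintype.sum_sum_type, h1]
      linarith
end

section
/- For the configuration LP for max-min fairness with costs: let z be the optimal integral assignment with fairness F(z) > 0, and let T = 2^x be chosen with F(z) ∈ [T, 2T). Then z induces a feasible solution to CLP(T) (each machine's assigned job set is a valid configuration with total processing time ≥ T), so the LP optimum C(x(T)) satisfies C(x(T)) ≥ C(z), and therefore 2T + C(x(T)) ≥ F(z) + C(z). Consequently, the fractional solution x* maximizing 2T + C(x(T)) over all powers-of-two T satisfies 2F(x*) + C(x*) ≥ OPT. -/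
open Finset

/-- A configuration `S` is valid (small) for machine `i` at threshold `T`. -/
def validConfig {k m : ℕ} (p : Fin k → Fin m → ℝ) (T : ℝ) (i : Fin k) (S : Finset (Fin m)) :
    Prop := T ≤ ∑ j ∈ S, p i j

/-- Feasibility for the configuration LP at threshold `T`. -/
def CLPfeas {k m : ℕ} (p : Fin k → Fin m → ℝ) (T : ℝ)
    (xc : Fin k → Finset (Fin m) → ℝ) : Prop :=
  (∀ i S, 0 ≤ xc i S) ∧
  (∀ i S, ¬ validConfig p T i S → xc i S = 0) ∧
  (∀ i, ∑ S : Finset (Fin m), xc i S = 1) ∧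
  (∀ j, (∑ i, ∑ S ∈ Finset.univ.filter (fun S : Finset (Fin m) => j ∈ S), xc i S) ≤ 1)

/-- Objective of the configuration LP. -/
noncomputable def CLPobj {k m : ℕ} (c : Fin k → Fin m → ℝ)
    (xc : Fin k → Finset (Fin m) → ℝ) : ℝ :=
  ∑ i, ∑ S : Finset (Fin m), xc i S * ∑ j ∈ S, c i j

/-- Fractional assignment induced by a configuration-LP solution. -/
noncomputable def induced {k m : ℕ} (xc : Fin k → Finset (Fin m) → ℝ) :
    Fin k → Fin m → ℝ :=
  fun i j => ∑ S ∈ Finset.univ.filter (fun S : Finset (Fin m) => j ∈ S), xc i S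

lemma swap_sum19 {k m : ℕ} (xc : Fin k → Finset (Fin m) → ℝ) (i : Fin k) (f : Fin m → ℝ) :
    ∑ j, f j * induced xc i j = ∑ S : Finset (Fin m), xc i S * ∑ j ∈ S, f j := by
  have h1 : ∀ j, f j * induced xc i j
      = ∑ S : Finset (Fin m), if j ∈ S then f j * xc i S else 0 := fun j => by
    simp [induced, Finset.mul_sum, Finset.sum_filter]
  rw [Finset.sum_congr rfl fun j _ => h1 j, Finset.sum_comm]
  refine Finset.sum_congr rfl fun S _ => ?_
  rw [← Finset.sum_filter, Finset.filter_univ_mem, Finset.mul_sum]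
  exact Finset.sum_congr rfl fun j _ => mul_comm _ _

theorem stmt19 {k m : ℕ} (hk : 0 < k)
    (p c : Fin k → Fin m → ℝ) (hp : ∀ i j, 0 ≤ p i j)
    (T : ℝ) (hT : 0 < T)
    -- z is the optimal integral assignment, with F(z) ∈ [T, 2T)
    (z : Fin k → Fin m → ℝ) (hz : feasible z)
    (hzopt : ∀ z', feasible z' → fairness hk p z' + cost c z' ≤ fairness hk p z + cost c z)
    (hzT : T ≤ fairness hk p z) (hz2T : fairness hk p z < 2 * T) :
    -- z induces a feasible solution of CLP(T) with objective C(z)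
    (∃ xc : Fin k → Finset (Fin m) → ℝ, CLPfeas p T xc ∧ CLPobj c xc = cost c z) ∧
    -- hence any optimal solution xc of CLP(T) satisfies the claimed chain of inequalities
    (∀ xc : Fin k → Finset (Fin m) → ℝ, CLPfeas p T xc →
      (∀ xc', CLPfeas p T xc' → CLPobj c xc' ≤ CLPobj c xc) →
      cost c z ≤ CLPobj c xc ∧
      fairness hk p z + cost c z ≤ 2 * T + CLPobj c xc ∧
      T ≤ fairness hk p (induced xc) ∧
      cost c (induced xc) = CLPobj c xc ∧
      fairness hk p z + cost c z
        ≤ 2 * fairness hk p (induced xc) + cost c (induced xc)) := by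

  classical
  obtain ⟨hzint, hzfeas⟩ := hz
  set Sz : Fin k → Finset (Fin m) := fun i => Finset.univ.filter (fun j => z i j = 1) with hSz
  set xc0 : Fin k → Finset (Fin m) → ℝ := fun i S => if S = Sz i then 1 else 0 with hxc0
  have hsum : ∀ i (f : Fin m → ℝ), ∑ j ∈ Sz i, f j = ∑ j, f j * z i j := by
    intro i f
    rw [hSz]
    rw [Finset.sum_filter]
    refine Finset.sum_congr rfl fun j _ => ?_
    rcases hzint i j with h | h <;> simp [h]
  have hvalid : ∀ i, validConfig p T i (Sz i) := by
    intro i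
    unfold validConfig
    rw [hsum i (p i)]
    exact le_trans hzT (Finset.inf'_le _ (Finset.mem_univ i))
  have hfeas0 : CLPfeas p T xc0 := by
    refine ⟨fun i S => by positivity, fun i S h => ?_, fun i => ?_, fun j => ?_⟩
    · simp only [hxc0]
      split
      · next heq => exact absurd (heq ▸ hvalid i) h
      · rfl
    · simp [hxc0]
    · have : ∀ i : Fin k, ∑ S ∈ Finset.univ.filter (fun S : Finset (Fin m) => j ∈ S), xc0 i S
          = z i j := by
        intro i
        simp only [hxc0]
        rw [Finset.sum_ite_eq' _ (Sz i)]
        rcases hzint i j with h | h <;> simp [hSz, h, Finset.mem_filter]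
      rw [Finset.sum_congr rfl fun i _ => this i]
      exact hzfeas j
  have hobj0 : CLPobj c xc0 = cost c z := by
    unfold CLPobj cost
    refine Finset.sum_congr rfl fun i _ => ?_
    simp only [hxc0]
    rw [Finset.sum_eq_single (Sz i)]
    · simp [hsum i (c i)]
    · intro S _ hS; simp [hS]
    · intro h; exact absurd (Finset.mem_univ _) h
  refine ⟨⟨xc0, hfeas0, hobj0⟩, fun xc hxc hopt => ?_⟩
  obtain ⟨hpos, hinv, hone, hjob⟩ := hxc
  have h1 : cost c z ≤ CLPobj c xc := hobj0 ▸ hopt xc0 hfeas0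
  have h2 : fairness hk p z + cost c z ≤ 2 * T + CLPobj c xc :=
    add_le_add (le_of_lt hz2T) h1
  have h3 : T ≤ fairness hk p (induced xc) := by
    refine Finset.le_inf' _ _ fun i _ => ?_
    rw [swap_sum19]
    calc T = ∑ S : Finset (Fin m), xc i S * T := by rw [← Finset.sum_mul, hone i, one_mul]
    _ ≤ ∑ S : Finset (Fin m), xc i S * ∑ j ∈ S, p i j := by
        refine Finset.sum_le_sum fun S _ => ?_
        by_cases h : validConfig p T i S
        · exact mul_le_mul_of_nonneg_left h (hpos i S)
        · simp [hinv i S h]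
  have h4 : cost c (induced xc) = CLPobj c xc := by
    unfold cost CLPobj
    exact Finset.sum_congr rfl fun i _ => swap_sum19 xc i (c i)
  refine ⟨h1, h2, h3, h4, ?_⟩
  calc fairness hk p z + cost c z ≤ 2 * T + CLPobj c xc := h2
  _ ≤ 2 * fairness hk p (induced xc) + cost c (induced xc) := by
      rw [h4]; gcongr
end
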